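/- Let K, L, M be symmetric n×n real matrices, H = I − (1/n)𝟙𝟙ᵀ, and K̃ = HKH, L̃ = HLH, M̃ = HMH. Then (1/n²)(K ∘ L ∘ M)_{++} − (2/n³)[((K ∘ L)M)_{++} + ((K ∘ M)L)_{++} + ((L ∘ M)K)_{++}] + (2/n⁴)[(KLM)_{++} + (KML)_{++} + (MKL)_{++}] + (4/n⁴) ∑_{a=1}^{n} K_{a+} L_{a+} M_{a+} + (1/n⁴)[(K ∘ L)_{++} M_{++} + (K ∘ M)_{++} L_{++} + (L ∘ M)_{++} K_{++}] − (4/n⁵)[(KL)_{++} M_{++} + (KM)_{++} L_{++} + (LM)_{++} K_{++}] + (4/n⁶) K_{++} L_{++} M_{++} = (1/n²)(K̃ ∘ L̃ ∘ M̃)_{++}. (The left-hand side is the expansion of the squared RKHS norm ‖Δ_L P̂‖² of the embedded empirical Lancaster interaction measure in terms of Gram matrices; the proposition states it equals the single centered-matrix expression on the right.) -/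
import Mathlib


open Matrix Finset
open scoped Matrix

/-- Sum of all entries of a square matrix. -/
noncomputable def sumAll {n : ℕ} (A : Matrix (Fin n) (Fin n) ℝ) : ℝ := ∑ i : Fin n, ∑ j : Fin n, A i j

/-- Sum of the a-th row of a square matrix. -/
noncomputable def rowSum {n : ℕ} (A : Matrix (Fin n) (Fin n) ℝ) (a : Fin n) : ℝ := ∑ j, A a j

/-- The all-ones matrix 𝟙𝟙ᵀ. -/
def onesMat (n : ℕ) : Matrix (Fin n) (Fin n) ℝ := Matrix.of fun _ _ => 1

/-- The centering matrix H = I - (1/n)𝟙𝟙ᵀ. -/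
noncomputable def centMat (n : ℕ) : Matrix (Fin n) (Fin n) ℝ :=
  1 - (1 / (n : ℝ)) • onesMat n

theorem cent_apply {n : ℕ} (K : Matrix (Fin n) (Fin n) ℝ) (hK : K.IsSymm) (i j : Fin n) :
    (centMat n * K * centMat n) i j
      = K i j - (n:ℝ)⁻¹ * rowSum K i - (n:ℝ)⁻¹ * rowSum K j + (n:ℝ)⁻¹ ^ 2 * sumAll K := by
  have hs : ∀ a b, K a b = K b a := fun a b => (hK.apply b a)
  simp [centMat, Matrix.mul_apply, Matrix.sub_apply, Matrix.one_apply, onesMat, sumAll, rowSum,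
    Finset.sum_sub_distrib, Finset.mul_sum, Finset.sum_mul, sub_mul, mul_sub]
  have e1 : ∑ x, (↑n:ℝ)⁻¹ * K x j = ∑ x, (↑n:ℝ)⁻¹ * K j x :=
    Finset.sum_congr rfl fun x _ => by rw [hs x j]
  rw [e1, Finset.sum_comm]
  ring_nf

theorem sumAll_mul {n : ℕ} (X C : Matrix (Fin n) (Fin n) ℝ) :
    sumAll (X * C) = ∑ i, ∑ b, X i b * rowSum C b := by
  simp only [sumAll, Matrix.mul_apply, rowSum]
  refine Finset.sum_congr rfl fun i _ => ?_
  rw [Finset.sum_comm]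
  exact Finset.sum_congr rfl fun b _ => (Finset.mul_sum _ _ _).symm

theorem colSum_eq {n : ℕ} (A : Matrix (Fin n) (Fin n) ℝ) (hA : A.IsSymm) (a : Fin n) :
    ∑ i, A i a = rowSum A a :=
  Finset.sum_congr rfl fun i _ => hA.apply a i ▸ rfl

theorem sum_had3 {n : ℕ} (A B C : Matrix (Fin n) (Fin n) ℝ) :
    sumAll (A ⊙ B ⊙ C) = ∑ i : Fin n, ∑ j : Fin n, A i j * B i j * C i j := by
  simp [sumAll, Matrix.hadamard_apply]

theorem sum_had {n : ℕ} (A B : Matrix (Fin n) (Fin n) ℝ) :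
    sumAll (A ⊙ B) = ∑ i : Fin n, ∑ j : Fin n, A i j * B i j := by
  simp [sumAll, Matrix.hadamard_apply]

theorem sum_hadmul {n : ℕ} (A B C : Matrix (Fin n) (Fin n) ℝ) :
    sumAll ((A ⊙ B) * C) = ∑ i : Fin n, ∑ j : Fin n, A i j * B i j * rowSum C j := by
  rw [sumAll_mul]; simp [Matrix.hadamard_apply]

theorem sum_pair {n : ℕ} (A B : Matrix (Fin n) (Fin n) ℝ) (hA : A.IsSymm) :
    sumAll (A * B) = ∑ a, rowSum A a * rowSum B a := by
  rw [sumAll_mul, Finset.sum_comm]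
  refine Finset.sum_congr rfl fun b _ => ?_
  rw [← Finset.sum_mul, colSum_eq A hA]

theorem sum_triple {n : ℕ} (A B C : Matrix (Fin n) (Fin n) ℝ) (hA : A.IsSymm) :
    sumAll (A * B * C) = ∑ i : Fin n, ∑ j : Fin n, rowSum A i * B i j * rowSum C j := by
  rw [sumAll_mul, Finset.sum_comm]
  have step : ∀ b, ∑ x, (A * B) x b * rowSum C b = ∑ a, rowSum A a * B a b * rowSum C b := by
    intro b
    rw [← Finset.sum_mul, ← Finset.sum_mul]
    congr 1
    simp only [Matrix.mul_apply]
    rw [Finset.sum_comm]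
    exact Finset.sum_congr rfl fun a _ => by rw [← Finset.sum_mul, colSum_eq A hA]
  rw [Finset.sum_congr rfl fun b _ => step b, Finset.sum_comm]

set_option maxHeartbeats 4000000 in
theorem lancaster_V_statistic {n : ℕ} (hn : 0 < n)
    (K L M : Matrix (Fin n) (Fin n) ℝ)
    (hK : K.IsSymm) (hL : L.IsSymm) (hM : M.IsSymm) :
    (1 / (n : ℝ) ^ 2) * sumAll (K ⊙ L ⊙ M)
      - (2 / (n : ℝ) ^ 3) * (sumAll ((K ⊙ L) * M) + sumAll ((K ⊙ M) * L) + sumAll ((L ⊙ M) * K))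
      + (2 / (n : ℝ) ^ 4) * (sumAll (K * L * M) + sumAll (K * M * L) + sumAll (M * K * L))
      + (4 / (n : ℝ) ^ 4) * (∑ a, rowSum K a * rowSum L a * rowSum M a)
      + (1 / (n : ℝ) ^ 4) *
          (sumAll (K ⊙ L) * sumAll M + sumAll (K ⊙ M) * sumAll L + sumAll (L ⊙ M) * sumAll K)
      - (4 / (n : ℝ) ^ 5) *
          (sumAll (K * L) * sumAll M + sumAll (K * M) * sumAll L + sumAll (L * M) * sumAll K)
      + (4 / (n : ℝ) ^ 6) * (sumAll K * sumAll L * sumAll M)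
    = (1 / (n : ℝ) ^ 2) *
        sumAll ((centMat n * K * centMat n) ⊙ (centMat n * L * centMat n) ⊙
          (centMat n * M * centMat n)) := by
  have hn' : (n:ℝ) ≠ 0 := Nat.cast_ne_zero.mpr hn.ne'
  have hsK : ∀ a b, K a b = K b a := fun a b => hK.apply b a
  have hsL : ∀ a b, L a b = L b a := fun a b => hL.apply b a
  have hsM : ∀ a b, M a b = M b a := fun a b => hM.apply b a
  have hrK : ∀ a, (∑ j, K a j) = rowSum K a := fun _ => rfl
  have hrL : ∀ a, (∑ j, L a j) = rowSum L a := fun _ => rfl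
  have hrM : ∀ a, (∑ j, M a j) = rowSum M a := fun _ => rfl
  have hSK : sumAll K = ∑ a, rowSum K a := rfl
  have hSL : sumAll L = ∑ a, rowSum L a := rfl
  have hSM : sumAll M = ∑ a, rowSum M a := rfl
  have hc0 : (∑ i : Fin n, ∑ j : Fin n, K i j * L i j * rowSum M i) = ∑ i : Fin n, ∑ j : Fin n, K i j * L i j * rowSum M j :=
    by rw [Finset.sum_comm]; exact Finset.sum_congr rfl fun a _ => Finset.sum_congr rfl fun b _ => by rw [hsK b a, hsL b a]
  have hc1 : (∑ i : Fin n, ∑ j : Fin n, K i j * M i j * rowSum L i) = ∑ i : Fin n, ∑ j : Fin n, K i j * M i j * rowSum L j :=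
    by rw [Finset.sum_comm]; exact Finset.sum_congr rfl fun a _ => Finset.sum_congr rfl fun b _ => by rw [hsK b a, hsM b a]
  have hc2 : (∑ i : Fin n, ∑ j : Fin n, rowSum L i * rowSum M i * K i j) = ∑ a, rowSum K a * rowSum L a * rowSum M a :=
    by simp only [← Finset.mul_sum]; exact Finset.sum_congr rfl fun a _ => by rw [hrK a]; try ring
  have hc3 : (∑ i : Fin n, ∑ j : Fin n, rowSum L i * K i j * rowSum M j) = ∑ i : Fin n, ∑ j : Fin n, rowSum M i * K i j * rowSum L j :=
    by rw [Finset.sum_comm]; exact Finset.sum_congr rfl fun a _ => Finset.sum_congr rfl fun b _ => by rw [hsK b a]; try ring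
  have hc4 : (∑ i : Fin n, ∑ j : Fin n, rowSum L i * K i j) = ∑ a, rowSum K a * rowSum L a :=
    by simp only [← Finset.mul_sum]; exact Finset.sum_congr rfl fun a _ => by rw [hrK a]; try ring
  have hc5 : (∑ i : Fin n, ∑ j : Fin n, rowSum L j * rowSum M j * K i j) = ∑ a, rowSum K a * rowSum L a * rowSum M a :=
    by rw [Finset.sum_comm]; simp only [← Finset.mul_sum]; exact Finset.sum_congr rfl fun a _ => by rw [colSum_eq K hK a]; try ring
  have hc6 : (∑ i : Fin n, ∑ j : Fin n, rowSum L j * K i j) = ∑ a, rowSum K a * rowSum L a :=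
    by rw [Finset.sum_comm]; simp only [← Finset.mul_sum]; exact Finset.sum_congr rfl fun a _ => by rw [colSum_eq K hK a]; try ring
  have hc7 : (∑ i : Fin n, ∑ j : Fin n, rowSum M i * K i j) = ∑ a, rowSum K a * rowSum M a :=
    by simp only [← Finset.mul_sum]; exact Finset.sum_congr rfl fun a _ => by rw [hrK a]; try ring
  have hc8 : (∑ i : Fin n, ∑ j : Fin n, rowSum M j * K i j) = ∑ a, rowSum K a * rowSum M a :=
    by rw [Finset.sum_comm]; simp only [← Finset.mul_sum]; exact Finset.sum_congr rfl fun a _ => by rw [colSum_eq K hK a]; try ring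
  have hc9 : (∑ i : Fin n, ∑ j : Fin n, K i j) = ∑ a, rowSum K a :=
    Finset.sum_congr rfl fun a _ => hrK a
  have hc10 : (∑ i : Fin n, ∑ j : Fin n, L i j * M i j * rowSum K i) = ∑ i : Fin n, ∑ j : Fin n, L i j * M i j * rowSum K j :=
    by rw [Finset.sum_comm]; exact Finset.sum_congr rfl fun a _ => Finset.sum_congr rfl fun b _ => by rw [hsL b a, hsM b a]
  have hc11 : (∑ i : Fin n, ∑ j : Fin n, rowSum K i * rowSum M i * L i j) = ∑ a, rowSum K a * rowSum L a * rowSum M a :=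
    by simp only [← Finset.mul_sum]; exact Finset.sum_congr rfl fun a _ => by rw [hrL a]; try ring
  have hc12 : (∑ i : Fin n, ∑ j : Fin n, rowSum K i * L i j) = ∑ a, rowSum K a * rowSum L a :=
    by simp only [← Finset.mul_sum]; exact Finset.sum_congr rfl fun a _ => by rw [hrL a]; try ring
  have hc13 : (∑ i : Fin n, ∑ j : Fin n, rowSum K i * rowSum L i * M i j) = ∑ a, rowSum K a * rowSum L a * rowSum M a :=
    by simp only [← Finset.mul_sum]; exact Finset.sum_congr rfl fun a _ => by rw [hrM a]; try ring
  have hc14 : (∑ i : Fin n, ∑ j : Fin n, rowSum K i * rowSum L i * rowSum M i) = (n:ℝ) * ∑ a, rowSum K a * rowSum L a * rowSum M a :=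
    by simp only [Finset.sum_const, Finset.card_univ, Fintype.card_fin, nsmul_eq_mul, ← Finset.mul_sum]
  have hc15 : (∑ i : Fin n, ∑ j : Fin n, rowSum K i * rowSum L i * rowSum M j) = (∑ a, rowSum K a * rowSum L a) * ∑ a, rowSum M a :=
    (Finset.sum_mul_sum _ _ _ _).symm
  have hc16 : (∑ i : Fin n, ∑ j : Fin n, rowSum K i * rowSum L i) = (n:ℝ) * ∑ a, rowSum K a * rowSum L a :=
    by simp only [Finset.sum_const, Finset.card_univ, Fintype.card_fin, nsmul_eq_mul, ← Finset.mul_sum]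
  have hc17 : (∑ i : Fin n, ∑ j : Fin n, rowSum K i * rowSum M i * rowSum L j) = (∑ a, rowSum K a * rowSum M a) * ∑ a, rowSum L a :=
    (Finset.sum_mul_sum _ _ _ _).symm
  have hc18 : (∑ i : Fin n, ∑ j : Fin n, rowSum K i * (rowSum L j * rowSum M j)) = (∑ a, rowSum K a) * ∑ a, rowSum L a * rowSum M a :=
    (Finset.sum_mul_sum _ _ _ _).symm
  have hc19 : (∑ i : Fin n, ∑ j : Fin n, rowSum K i * rowSum L j) = (∑ a, rowSum K a) * ∑ a, rowSum L a :=
    (Finset.sum_mul_sum _ _ _ _).symm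
  have hc20 : (∑ i : Fin n, ∑ j : Fin n, rowSum K i * M i j) = ∑ a, rowSum K a * rowSum M a :=
    by simp only [← Finset.mul_sum]; exact Finset.sum_congr rfl fun a _ => by rw [hrM a]; try ring
  have hc21 : (∑ i : Fin n, ∑ j : Fin n, rowSum K i * rowSum M i) = (n:ℝ) * ∑ a, rowSum K a * rowSum M a :=
    by simp only [Finset.sum_const, Finset.card_univ, Fintype.card_fin, nsmul_eq_mul, ← Finset.mul_sum]
  have hc22 : (∑ i : Fin n, ∑ j : Fin n, rowSum K i * rowSum M j) = (∑ a, rowSum K a) * ∑ a, rowSum M a :=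
    (Finset.sum_mul_sum _ _ _ _).symm
  have hc23 : (∑ i : Fin n, ∑ j : Fin n, rowSum K i) = (n:ℝ) * ∑ a, rowSum K a :=
    by simp only [Finset.sum_const, Finset.card_univ, Fintype.card_fin, nsmul_eq_mul, ← Finset.mul_sum]
  have hc24 : (∑ i : Fin n, ∑ j : Fin n, rowSum M i * L i j * rowSum K j) = ∑ i : Fin n, ∑ j : Fin n, rowSum K i * L i j * rowSum M j :=
    by rw [Finset.sum_comm]; exact Finset.sum_congr rfl fun a _ => Finset.sum_congr rfl fun b _ => by rw [hsL b a]; try ring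
  have hc25 : (∑ i : Fin n, ∑ j : Fin n, rowSum K j * rowSum M j * L i j) = ∑ a, rowSum K a * rowSum L a * rowSum M a :=
    by rw [Finset.sum_comm]; simp only [← Finset.mul_sum]; exact Finset.sum_congr rfl fun a _ => by rw [colSum_eq L hL a]; try ring
  have hc26 : (∑ i : Fin n, ∑ j : Fin n, rowSum K j * L i j) = ∑ a, rowSum K a * rowSum L a :=
    by rw [Finset.sum_comm]; simp only [← Finset.mul_sum]; exact Finset.sum_congr rfl fun a _ => by rw [colSum_eq L hL a]; try ring
  have hc27 : (∑ i : Fin n, ∑ j : Fin n, rowSum L i * M i j * rowSum K j) = ∑ i : Fin n, ∑ j : Fin n, rowSum K i * M i j * rowSum L j :=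
    by rw [Finset.sum_comm]; exact Finset.sum_congr rfl fun a _ => Finset.sum_congr rfl fun b _ => by rw [hsM b a]; try ring
  have hc28 : (∑ i : Fin n, ∑ j : Fin n, rowSum L i * rowSum M i * rowSum K j) = (∑ a, rowSum L a * rowSum M a) * ∑ a, rowSum K a :=
    (Finset.sum_mul_sum _ _ _ _).symm
  have hc29 : (∑ i : Fin n, ∑ j : Fin n, rowSum L i * (rowSum K j * rowSum M j)) = (∑ a, rowSum L a) * ∑ a, rowSum K a * rowSum M a :=
    (Finset.sum_mul_sum _ _ _ _).symm
  have hc30 : (∑ i : Fin n, ∑ j : Fin n, rowSum L i * rowSum K j) = (∑ a, rowSum L a) * ∑ a, rowSum K a :=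
    (Finset.sum_mul_sum _ _ _ _).symm
  have hc31 : (∑ i : Fin n, ∑ j : Fin n, rowSum K j * rowSum L j * M i j) = ∑ a, rowSum K a * rowSum L a * rowSum M a :=
    by rw [Finset.sum_comm]; simp only [← Finset.mul_sum]; exact Finset.sum_congr rfl fun a _ => by rw [colSum_eq M hM a]; try ring
  have hc32 : (∑ i : Fin n, ∑ j : Fin n, rowSum M i * (rowSum K j * rowSum L j)) = (∑ a, rowSum M a) * ∑ a, rowSum K a * rowSum L a :=
    (Finset.sum_mul_sum _ _ _ _).symm
  have hc33 : (∑ i : Fin n, ∑ j : Fin n, rowSum K j * rowSum L j * rowSum M j) = (n:ℝ) * ∑ a, rowSum K a * rowSum L a * rowSum M a :=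
    by rw [Finset.sum_comm]; simp only [Finset.sum_const, Finset.card_univ, Fintype.card_fin, nsmul_eq_mul, ← Finset.mul_sum]
  have hc34 : (∑ i : Fin n, ∑ j : Fin n, rowSum K j * rowSum L j) = (n:ℝ) * ∑ a, rowSum K a * rowSum L a :=
    by rw [Finset.sum_comm]; simp only [Finset.sum_const, Finset.card_univ, Fintype.card_fin, nsmul_eq_mul, ← Finset.mul_sum]
  have hc35 : (∑ i : Fin n, ∑ j : Fin n, rowSum K j * M i j) = ∑ a, rowSum K a * rowSum M a :=
    by rw [Finset.sum_comm]; simp only [← Finset.mul_sum]; exact Finset.sum_congr rfl fun a _ => by rw [colSum_eq M hM a]; try ring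
  have hc36 : (∑ i : Fin n, ∑ j : Fin n, rowSum M i * rowSum K j) = (∑ a, rowSum M a) * ∑ a, rowSum K a :=
    (Finset.sum_mul_sum _ _ _ _).symm
  have hc37 : (∑ i : Fin n, ∑ j : Fin n, rowSum K j * rowSum M j) = (n:ℝ) * ∑ a, rowSum K a * rowSum M a :=
    by rw [Finset.sum_comm]; simp only [Finset.sum_const, Finset.card_univ, Fintype.card_fin, nsmul_eq_mul, ← Finset.mul_sum]
  have hc38 : (∑ i : Fin n, ∑ j : Fin n, rowSum K j) = (n:ℝ) * ∑ a, rowSum K a :=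
    by rw [Finset.sum_comm]; simp only [Finset.sum_const, Finset.card_univ, Fintype.card_fin, nsmul_eq_mul, ← Finset.mul_sum]
  have hc39 : (∑ i : Fin n, ∑ j : Fin n, rowSum M i * L i j) = ∑ a, rowSum L a * rowSum M a :=
    by simp only [← Finset.mul_sum]; exact Finset.sum_congr rfl fun a _ => by rw [hrL a]; try ring
  have hc40 : (∑ i : Fin n, ∑ j : Fin n, rowSum M j * L i j) = ∑ a, rowSum L a * rowSum M a :=
    by rw [Finset.sum_comm]; simp only [← Finset.mul_sum]; exact Finset.sum_congr rfl fun a _ => by rw [colSum_eq L hL a]; try ring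
  have hc41 : (∑ i : Fin n, ∑ j : Fin n, L i j) = ∑ a, rowSum L a :=
    Finset.sum_congr rfl fun a _ => hrL a
  have hc42 : (∑ i : Fin n, ∑ j : Fin n, rowSum L i * M i j) = ∑ a, rowSum L a * rowSum M a :=
    by simp only [← Finset.mul_sum]; exact Finset.sum_congr rfl fun a _ => by rw [hrM a]; try ring
  have hc43 : (∑ i : Fin n, ∑ j : Fin n, rowSum L i * rowSum M i) = (n:ℝ) * ∑ a, rowSum L a * rowSum M a :=
    by simp only [Finset.sum_const, Finset.card_univ, Fintype.card_fin, nsmul_eq_mul, ← Finset.mul_sum]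
  have hc44 : (∑ i : Fin n, ∑ j : Fin n, rowSum L i * rowSum M j) = (∑ a, rowSum L a) * ∑ a, rowSum M a :=
    (Finset.sum_mul_sum _ _ _ _).symm
  have hc45 : (∑ i : Fin n, ∑ j : Fin n, rowSum L i) = (n:ℝ) * ∑ a, rowSum L a :=
    by simp only [Finset.sum_const, Finset.card_univ, Fintype.card_fin, nsmul_eq_mul, ← Finset.mul_sum]
  have hc46 : (∑ i : Fin n, ∑ j : Fin n, rowSum L j * M i j) = ∑ a, rowSum L a * rowSum M a :=
    by rw [Finset.sum_comm]; simp only [← Finset.mul_sum]; exact Finset.sum_congr rfl fun a _ => by rw [colSum_eq M hM a]; try ring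
  have hc47 : (∑ i : Fin n, ∑ j : Fin n, rowSum M i * rowSum L j) = (∑ a, rowSum M a) * ∑ a, rowSum L a :=
    (Finset.sum_mul_sum _ _ _ _).symm
  have hc48 : (∑ i : Fin n, ∑ j : Fin n, rowSum L j * rowSum M j) = (n:ℝ) * ∑ a, rowSum L a * rowSum M a :=
    by rw [Finset.sum_comm]; simp only [Finset.sum_const, Finset.card_univ, Fintype.card_fin, nsmul_eq_mul, ← Finset.mul_sum]
  have hc49 : (∑ i : Fin n, ∑ j : Fin n, rowSum L j) = (n:ℝ) * ∑ a, rowSum L a :=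
    by rw [Finset.sum_comm]; simp only [Finset.sum_const, Finset.card_univ, Fintype.card_fin, nsmul_eq_mul, ← Finset.mul_sum]
  have hc50 : (∑ i : Fin n, ∑ j : Fin n, M i j) = ∑ a, rowSum M a :=
    Finset.sum_congr rfl fun a _ => hrM a
  have hc51 : (∑ i : Fin n, ∑ j : Fin n, rowSum M i) = (n:ℝ) * ∑ a, rowSum M a :=
    by simp only [Finset.sum_const, Finset.card_univ, Fintype.card_fin, nsmul_eq_mul, ← Finset.mul_sum]
  have hc52 : (∑ i : Fin n, ∑ j : Fin n, rowSum M j) = (n:ℝ) * ∑ a, rowSum M a :=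
    by rw [Finset.sum_comm]; simp only [Finset.sum_const, Finset.card_univ, Fintype.card_fin, nsmul_eq_mul, ← Finset.mul_sum]
  have hc53 : (∑ i : Fin n, ∑ j : Fin n, (1:ℝ)) = (n:ℝ) * ((n:ℝ) * (1:ℝ)) :=
    by simp only [Finset.sum_const, Finset.card_univ, Fintype.card_fin, nsmul_eq_mul]
  have key :
      ((∑ i : Fin n, ∑ j : Fin n, K i j * L i j * M i j) +
        (-(n:ℝ)⁻¹) * (∑ i : Fin n, ∑ j : Fin n, K i j * L i j * rowSum M i) +
        (-(n:ℝ)⁻¹) * (∑ i : Fin n, ∑ j : Fin n, K i j * L i j * rowSum M j) +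
        (((n:ℝ)⁻¹ ^ 2 * sumAll M)) * (∑ i : Fin n, ∑ j : Fin n, K i j * L i j) +
        (-(n:ℝ)⁻¹) * (∑ i : Fin n, ∑ j : Fin n, K i j * M i j * rowSum L i) +
        (-(n:ℝ)⁻¹ * -(n:ℝ)⁻¹) * (∑ i : Fin n, ∑ j : Fin n, rowSum L i * rowSum M i * K i j) +
        (-(n:ℝ)⁻¹ * -(n:ℝ)⁻¹) * (∑ i : Fin n, ∑ j : Fin n, rowSum L i * K i j * rowSum M j) +
        (-(n:ℝ)⁻¹ * ((n:ℝ)⁻¹ ^ 2 * sumAll M)) * (∑ i : Fin n, ∑ j : Fin n, rowSum L i * K i j) +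
        (-(n:ℝ)⁻¹) * (∑ i : Fin n, ∑ j : Fin n, K i j * M i j * rowSum L j) +
        (-(n:ℝ)⁻¹ * -(n:ℝ)⁻¹) * (∑ i : Fin n, ∑ j : Fin n, rowSum M i * K i j * rowSum L j) +
        (-(n:ℝ)⁻¹ * -(n:ℝ)⁻¹) * (∑ i : Fin n, ∑ j : Fin n, rowSum L j * rowSum M j * K i j) +
        (-(n:ℝ)⁻¹ * ((n:ℝ)⁻¹ ^ 2 * sumAll M)) * (∑ i : Fin n, ∑ j : Fin n, rowSum L j * K i j) +
        (((n:ℝ)⁻¹ ^ 2 * sumAll L)) * (∑ i : Fin n, ∑ j : Fin n, K i j * M i j) +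
        (((n:ℝ)⁻¹ ^ 2 * sumAll L) * -(n:ℝ)⁻¹) * (∑ i : Fin n, ∑ j : Fin n, rowSum M i * K i j) +
        (((n:ℝ)⁻¹ ^ 2 * sumAll L) * -(n:ℝ)⁻¹) * (∑ i : Fin n, ∑ j : Fin n, rowSum M j * K i j) +
        (((n:ℝ)⁻¹ ^ 2 * sumAll L) * ((n:ℝ)⁻¹ ^ 2 * sumAll M)) * (∑ i : Fin n, ∑ j : Fin n, K i j) +
        (-(n:ℝ)⁻¹) * (∑ i : Fin n, ∑ j : Fin n, L i j * M i j * rowSum K i) +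
        (-(n:ℝ)⁻¹ * -(n:ℝ)⁻¹) * (∑ i : Fin n, ∑ j : Fin n, rowSum K i * rowSum M i * L i j) +
        (-(n:ℝ)⁻¹ * -(n:ℝ)⁻¹) * (∑ i : Fin n, ∑ j : Fin n, rowSum K i * L i j * rowSum M j) +
        (-(n:ℝ)⁻¹ * ((n:ℝ)⁻¹ ^ 2 * sumAll M)) * (∑ i : Fin n, ∑ j : Fin n, rowSum K i * L i j) +
        (-(n:ℝ)⁻¹ * -(n:ℝ)⁻¹) * (∑ i : Fin n, ∑ j : Fin n, rowSum K i * rowSum L i * M i j) +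
        (-(n:ℝ)⁻¹ * -(n:ℝ)⁻¹ * -(n:ℝ)⁻¹) * (∑ i : Fin n, ∑ j : Fin n, rowSum K i * rowSum L i * rowSum M i) +
        (-(n:ℝ)⁻¹ * -(n:ℝ)⁻¹ * -(n:ℝ)⁻¹) * (∑ i : Fin n, ∑ j : Fin n, rowSum K i * rowSum L i * rowSum M j) +
        (-(n:ℝ)⁻¹ * -(n:ℝ)⁻¹ * ((n:ℝ)⁻¹ ^ 2 * sumAll M)) * (∑ i : Fin n, ∑ j : Fin n, rowSum K i * rowSum L i) +
        (-(n:ℝ)⁻¹ * -(n:ℝ)⁻¹) * (∑ i : Fin n, ∑ j : Fin n, rowSum K i * M i j * rowSum L j) +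
        (-(n:ℝ)⁻¹ * -(n:ℝ)⁻¹ * -(n:ℝ)⁻¹) * (∑ i : Fin n, ∑ j : Fin n, rowSum K i * rowSum M i * rowSum L j) +
        (-(n:ℝ)⁻¹ * -(n:ℝ)⁻¹ * -(n:ℝ)⁻¹) * (∑ i : Fin n, ∑ j : Fin n, rowSum K i * (rowSum L j * rowSum M j)) +
        (-(n:ℝ)⁻¹ * -(n:ℝ)⁻¹ * ((n:ℝ)⁻¹ ^ 2 * sumAll M)) * (∑ i : Fin n, ∑ j : Fin n, rowSum K i * rowSum L j) +
        (-(n:ℝ)⁻¹ * ((n:ℝ)⁻¹ ^ 2 * sumAll L)) * (∑ i : Fin n, ∑ j : Fin n, rowSum K i * M i j) +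
        (-(n:ℝ)⁻¹ * ((n:ℝ)⁻¹ ^ 2 * sumAll L) * -(n:ℝ)⁻¹) * (∑ i : Fin n, ∑ j : Fin n, rowSum K i * rowSum M i) +
        (-(n:ℝ)⁻¹ * ((n:ℝ)⁻¹ ^ 2 * sumAll L) * -(n:ℝ)⁻¹) * (∑ i : Fin n, ∑ j : Fin n, rowSum K i * rowSum M j) +
        (-(n:ℝ)⁻¹ * ((n:ℝ)⁻¹ ^ 2 * sumAll L) * ((n:ℝ)⁻¹ ^ 2 * sumAll M)) * (∑ i : Fin n, ∑ j : Fin n, rowSum K i) +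
        (-(n:ℝ)⁻¹) * (∑ i : Fin n, ∑ j : Fin n, L i j * M i j * rowSum K j) +
        (-(n:ℝ)⁻¹ * -(n:ℝ)⁻¹) * (∑ i : Fin n, ∑ j : Fin n, rowSum M i * L i j * rowSum K j) +
        (-(n:ℝ)⁻¹ * -(n:ℝ)⁻¹) * (∑ i : Fin n, ∑ j : Fin n, rowSum K j * rowSum M j * L i j) +
        (-(n:ℝ)⁻¹ * ((n:ℝ)⁻¹ ^ 2 * sumAll M)) * (∑ i : Fin n, ∑ j : Fin n, rowSum K j * L i j) +
        (-(n:ℝ)⁻¹ * -(n:ℝ)⁻¹) * (∑ i : Fin n, ∑ j : Fin n, rowSum L i * M i j * rowSum K j) +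
        (-(n:ℝ)⁻¹ * -(n:ℝ)⁻¹ * -(n:ℝ)⁻¹) * (∑ i : Fin n, ∑ j : Fin n, rowSum L i * rowSum M i * rowSum K j) +
        (-(n:ℝ)⁻¹ * -(n:ℝ)⁻¹ * -(n:ℝ)⁻¹) * (∑ i : Fin n, ∑ j : Fin n, rowSum L i * (rowSum K j * rowSum M j)) +
        (-(n:ℝ)⁻¹ * -(n:ℝ)⁻¹ * ((n:ℝ)⁻¹ ^ 2 * sumAll M)) * (∑ i : Fin n, ∑ j : Fin n, rowSum L i * rowSum K j) +
        (-(n:ℝ)⁻¹ * -(n:ℝ)⁻¹) * (∑ i : Fin n, ∑ j : Fin n, rowSum K j * rowSum L j * M i j) +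
        (-(n:ℝ)⁻¹ * -(n:ℝ)⁻¹ * -(n:ℝ)⁻¹) * (∑ i : Fin n, ∑ j : Fin n, rowSum M i * (rowSum K j * rowSum L j)) +
        (-(n:ℝ)⁻¹ * -(n:ℝ)⁻¹ * -(n:ℝ)⁻¹) * (∑ i : Fin n, ∑ j : Fin n, rowSum K j * rowSum L j * rowSum M j) +
        (-(n:ℝ)⁻¹ * -(n:ℝ)⁻¹ * ((n:ℝ)⁻¹ ^ 2 * sumAll M)) * (∑ i : Fin n, ∑ j : Fin n, rowSum K j * rowSum L j) +
        (-(n:ℝ)⁻¹ * ((n:ℝ)⁻¹ ^ 2 * sumAll L)) * (∑ i : Fin n, ∑ j : Fin n, rowSum K j * M i j) +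
        (-(n:ℝ)⁻¹ * ((n:ℝ)⁻¹ ^ 2 * sumAll L) * -(n:ℝ)⁻¹) * (∑ i : Fin n, ∑ j : Fin n, rowSum M i * rowSum K j) +
        (-(n:ℝ)⁻¹ * ((n:ℝ)⁻¹ ^ 2 * sumAll L) * -(n:ℝ)⁻¹) * (∑ i : Fin n, ∑ j : Fin n, rowSum K j * rowSum M j) +
        (-(n:ℝ)⁻¹ * ((n:ℝ)⁻¹ ^ 2 * sumAll L) * ((n:ℝ)⁻¹ ^ 2 * sumAll M)) * (∑ i : Fin n, ∑ j : Fin n, rowSum K j) +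
        (((n:ℝ)⁻¹ ^ 2 * sumAll K)) * (∑ i : Fin n, ∑ j : Fin n, L i j * M i j) +
        (((n:ℝ)⁻¹ ^ 2 * sumAll K) * -(n:ℝ)⁻¹) * (∑ i : Fin n, ∑ j : Fin n, rowSum M i * L i j) +
        (((n:ℝ)⁻¹ ^ 2 * sumAll K) * -(n:ℝ)⁻¹) * (∑ i : Fin n, ∑ j : Fin n, rowSum M j * L i j) +
        (((n:ℝ)⁻¹ ^ 2 * sumAll K) * ((n:ℝ)⁻¹ ^ 2 * sumAll M)) * (∑ i : Fin n, ∑ j : Fin n, L i j) +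
        (((n:ℝ)⁻¹ ^ 2 * sumAll K) * -(n:ℝ)⁻¹) * (∑ i : Fin n, ∑ j : Fin n, rowSum L i * M i j) +
        (((n:ℝ)⁻¹ ^ 2 * sumAll K) * -(n:ℝ)⁻¹ * -(n:ℝ)⁻¹) * (∑ i : Fin n, ∑ j : Fin n, rowSum L i * rowSum M i) +
        (((n:ℝ)⁻¹ ^ 2 * sumAll K) * -(n:ℝ)⁻¹ * -(n:ℝ)⁻¹) * (∑ i : Fin n, ∑ j : Fin n, rowSum L i * rowSum M j) +
        (((n:ℝ)⁻¹ ^ 2 * sumAll K) * -(n:ℝ)⁻¹ * ((n:ℝ)⁻¹ ^ 2 * sumAll M)) * (∑ i : Fin n, ∑ j : Fin n, rowSum L i) +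
        (((n:ℝ)⁻¹ ^ 2 * sumAll K) * -(n:ℝ)⁻¹) * (∑ i : Fin n, ∑ j : Fin n, rowSum L j * M i j) +
        (((n:ℝ)⁻¹ ^ 2 * sumAll K) * -(n:ℝ)⁻¹ * -(n:ℝ)⁻¹) * (∑ i : Fin n, ∑ j : Fin n, rowSum M i * rowSum L j) +
        (((n:ℝ)⁻¹ ^ 2 * sumAll K) * -(n:ℝ)⁻¹ * -(n:ℝ)⁻¹) * (∑ i : Fin n, ∑ j : Fin n, rowSum L j * rowSum M j) +
        (((n:ℝ)⁻¹ ^ 2 * sumAll K) * -(n:ℝ)⁻¹ * ((n:ℝ)⁻¹ ^ 2 * sumAll M)) * (∑ i : Fin n, ∑ j : Fin n, rowSum L j) +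
        (((n:ℝ)⁻¹ ^ 2 * sumAll K) * ((n:ℝ)⁻¹ ^ 2 * sumAll L)) * (∑ i : Fin n, ∑ j : Fin n, M i j) +
        (((n:ℝ)⁻¹ ^ 2 * sumAll K) * ((n:ℝ)⁻¹ ^ 2 * sumAll L) * -(n:ℝ)⁻¹) * (∑ i : Fin n, ∑ j : Fin n, rowSum M i) +
        (((n:ℝ)⁻¹ ^ 2 * sumAll K) * ((n:ℝ)⁻¹ ^ 2 * sumAll L) * -(n:ℝ)⁻¹) * (∑ i : Fin n, ∑ j : Fin n, rowSum M j) +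
        (((n:ℝ)⁻¹ ^ 2 * sumAll K) * ((n:ℝ)⁻¹ ^ 2 * sumAll L) * ((n:ℝ)⁻¹ ^ 2 * sumAll M)) * (∑ i : Fin n, ∑ j : Fin n, (1:ℝ)))
      = ∑ i : Fin n, ∑ j : Fin n, (K i j - (n:ℝ)⁻¹ * rowSum K i - (n:ℝ)⁻¹ * rowSum K j + (n:ℝ)⁻¹ ^ 2 * sumAll K) *
          (L i j - (n:ℝ)⁻¹ * rowSum L i - (n:ℝ)⁻¹ * rowSum L j + (n:ℝ)⁻¹ ^ 2 * sumAll L) *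
          (M i j - (n:ℝ)⁻¹ * rowSum M i - (n:ℝ)⁻¹ * rowSum M j + (n:ℝ)⁻¹ ^ 2 * sumAll M) := by
    simp only [Finset.mul_sum]
    simp only [← Finset.sum_add_distrib]
    refine Finset.sum_congr rfl fun i _ => Finset.sum_congr rfl fun j _ => ?_
    ring
  rw [sum_had3 (centMat n * K * centMat n) (centMat n * L * centMat n)
    (centMat n * M * centMat n)]
  simp only [cent_apply K hK, cent_apply L hL, cent_apply M hM]
  rw [← key]
  rw [hc0, hc1, hc2, hc3, hc4, hc5, hc6, hc7, hc8, hc9, hc10, hc11, hc12, hc13, hc14, hc15, hc16, hc17, hc18, hc19, hc20, hc21, hc22, hc23, hc24, hc25, hc26, hc27, hc28, hc29, hc30, hc31, hc32, hc33, hc34, hc35, hc36, hc37, hc38, hc39, hc40, hc41, hc42, hc43, hc44, hc45, hc46, hc47, hc48, hc49, hc50, hc51, hc52, hc53]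
  rw [sum_had3 K L M, sum_hadmul K L M, sum_hadmul K M L, sum_hadmul L M K,
    sum_triple K L M hK, sum_triple K M L hK, sum_triple M K L hM,
    sum_had K L, sum_had K M, sum_had L M,
    sum_pair K L hK, sum_pair K M hK, sum_pair L M hL,
    hSK, hSL, hSM]
  field_simp
  ring
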